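/- For positive integers a_1, ..., a_k with a_1 ≥ 2, t(a_1,...,a_k) = 2^{−(a_1 + ... + a_k)} ζ(a_1,...,a_k) − 2^{−(k−1)} Σ_{p odd, 1 ≤ p ≤ k} L_p ζ(a_1,...,a_k), where L_p ζ(a_1,...,a_k) denotes the sum of the binomial(k,p) alternating multiple zeta values ζ^{(ε_1,...,ε_k)}(a_1,...,a_k) over all sign tuples (ε_1,...,ε_k) ∈ {1,−1}^k having exactly p entries equal to −1. -/

import Mathlib

/-- Multiple t-value: sum over strictly decreasing tuples of odd positive
integers. -/
noncomputable def multT {k : ℕ} (a : Fin k → ℕ) : ℝ :=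
  ∑' n : {f : Fin k → ℕ // StrictAnti f ∧ ∀ i, Odd (f i)},
    ∏ i, 1 / ((n.1 i : ℝ) ^ (a i))

/-- Alternating (colored) multiple zeta value
`ζ^(ε_1,...,ε_k)(a_1,...,a_k) = Σ_{n_1 > ⋯ > n_k ≥ 1} ε_1^(n_1) ⋯ ε_k^(n_k) /
(n_1^(a_1) ⋯ n_k^(a_k))`, where each sign `ε i` is a unit of `ℤ`,
i.e. `1` or `-1`. -/
noncomputable def altZeta {k : ℕ} (ε : Fin k → ℤˣ) (a : Fin k → ℕ) : ℝ :=
  ∑' n : {f : Fin k → ℕ // StrictAnti f ∧ ∀ i, 0 < f i},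
    ∏ i, ((ε i : ℤ) : ℝ) ^ (n.1 i) / ((n.1 i : ℝ) ^ (a i))

/-- The ordinary multiple zeta value is the alternating one with all signs
equal to `1`. -/
noncomputable def multZeta {k : ℕ} (a : Fin k → ℕ) : ℝ :=
  altZeta (fun _ => 1) a

section Aux
open Finset

lemma sum_units_real (F : ℤˣ → ℝ) : ∑ u : ℤˣ, F u = F 1 + F (-1) := by
  have h : (Finset.univ : Finset ℤˣ) = {1, -1} := by decide
  rw [h, Finset.sum_insert (by decide), Finset.sum_singleton]

lemma sum_pi_prod : ∀ (m : ℕ) (h : Fin m → ℤˣ → ℝ),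
    ∑ ε : Fin m → ℤˣ, ∏ i, h i (ε i) = ∏ i, ∑ u : ℤˣ, h i u := by
  intro m
  induction m with
  | zero => intro h; simp
  | succ m ih =>
    intro h
    have e1 : ∑ ε : Fin (m+1) → ℤˣ, ∏ i, h i (ε i)
        = ∑ p : ℤˣ × (Fin m → ℤˣ), h 0 p.1 * ∏ i : Fin m, h i.succ (p.2 i) := by
      refine (Fintype.sum_equiv (Fin.consEquiv (fun _ : Fin (m+1) => ℤˣ)).symm
        (fun ε => ∏ i, h i (ε i))
        (fun p => h 0 p.1 * ∏ i : Fin m, h i.succ (p.2 i)) ?_)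
      intro ε
      rw [Fin.prod_univ_succ]
      simp [Fin.consEquiv, Fin.tail]
    rw [e1, Fintype.sum_prod_type]
    dsimp only
    rw [← Finset.sum_mul_sum,
      ih fun i u => h i.succ u, ← Fin.prod_univ_succ (fun i => ∑ u : ℤˣ, h i u)]

lemma summable_pnat_rpow {q : ℝ} (hq : 1 < q) :
    Summable (fun n : ℕ+ => 1 / ((n : ℕ) : ℝ) ^ q) :=
  (Real.summable_one_div_nat_rpow.mpr hq).comp_injective
    (fun _ _ h => PNat.coe_injective h)

lemma summable_pi_prod {g : ℕ+ → ℝ} (hg : Summable g) (hg0 : ∀ n, 0 ≤ g n) (m : ℕ) :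
    Summable (fun f : Fin m → ℕ+ => ∏ i, g (f i)) := by
  induction m with
  | zero => exact Summable.of_finite
  | succ m ih =>
      have h2 : Summable (fun p : ℕ+ × (Fin m → ℕ+) => g p.1 * ∏ i, g (p.2 i)) := by
        refine Summable.mul_of_nonneg (f := g)
          (g := fun f : Fin m → ℕ+ => ∏ i, g (f i)) hg ih ?_ ?_
        · exact fun n => hg0 n
        · exact fun f => Finset.prod_nonneg fun i _ => hg0 _
      have h3 : Summable ((fun p : ℕ+ × (Fin m → ℕ+) => g p.1 * ∏ i, g (p.2 i)) ∘
          (fun f : Fin (m+1) → ℕ+ => (f 0, fun i => f i.succ))) := by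
        refine h2.comp_injective ?_
        intro f1 f2 h
        funext i
        refine Fin.cases ?_ ?_ i
        · exact congrArg Prod.fst h
        · intro j; exact congrFun (congrArg Prod.snd h) j
      refine h3.congr fun f => ?_
      simp [Function.comp, Fin.prod_univ_succ]
lemma summable_F (k : ℕ) (hk : 0 < k) (a : Fin k → ℕ)
    (ha0 : 2 ≤ a ⟨0, hk⟩) (ha : ∀ i, 1 ≤ a i) :
    Summable (fun n : {f : Fin k → ℕ // StrictAnti f ∧ ∀ i, 0 < f i} =>
      ∏ i, 1 / ((n.1 i : ℝ) ^ (a i))) := by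
  have hk' : (0:ℝ) < (k:ℝ) := by exact_mod_cast hk
  set q : ℝ := 1 + 1 / (k:ℝ) with hqdef
  have hq : 1 < q := by
    have : 0 < 1 / (k:ℝ) := by positivity
    simp only [hqdef]; linarith
  have hgs : Summable (fun f : Fin k → ℕ+ => ∏ i, 1 / ((f i : ℕ) : ℝ) ^ q) :=
    summable_pi_prod (summable_pnat_rpow hq) (fun n => by positivity) k
  have hsum2 : Summable ((fun f : Fin k → ℕ+ => ∏ i, 1 / ((f i : ℕ) : ℝ) ^ q) ∘
      (fun n : {f : Fin k → ℕ // StrictAnti f ∧ ∀ i, 0 < f i} =>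
        (fun i => ⟨n.1 i, n.2.2 i⟩ : Fin k → ℕ+))) := by
    refine hgs.comp_injective ?_
    intro x y hxy
    apply Subtype.ext
    funext i
    exact congrArg (fun f => ((f i : ℕ+) : ℕ)) hxy
  refine Summable.of_nonneg_of_le (fun n => Finset.prod_nonneg fun i _ => by positivity)
    ?_ hsum2
  rintro ⟨f, hsa, hpos⟩
  show ∏ i, 1 / ((f i : ℝ) ^ (a i)) ≤ ∏ i, 1 / ((f i : ℝ)) ^ q
  set i0 : Fin k := ⟨0, hk⟩ with hi0
  have h0 : ∀ i, (0:ℝ) < (f i : ℝ) := fun i => by exact_mod_cast hpos i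
  have h1 : ∀ i, (1:ℝ) ≤ (f i : ℝ) := fun i => by exact_mod_cast hpos i
  have hle : ∀ i, (f i : ℝ) ≤ (f i0 : ℝ) := by
    intro i
    have : f i ≤ f i0 := hsa.antitone (by simp [hi0, Fin.le_def])
    exact_mod_cast this
  have key : ∏ i, (f i : ℝ) ^ q ≤ ∏ i, (f i : ℝ) ^ (a i) := by
    calc ∏ i, (f i : ℝ) ^ q
        = ∏ i, ((f i : ℝ) * (f i : ℝ) ^ (1/(k:ℝ))) := by
          refine prod_congr rfl fun i _ => ?_
          rw [hqdef, Real.rpow_add (h0 i), Real.rpow_one]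
      _ = (∏ i, (f i : ℝ)) * ∏ i, (f i : ℝ) ^ (1/(k:ℝ)) := prod_mul_distrib
      _ ≤ (∏ i, (f i : ℝ)) * ∏ _i : Fin k, (f i0 : ℝ) ^ (1/(k:ℝ)) := by
          refine mul_le_mul_of_nonneg_left
            (prod_le_prod (fun i _ => by positivity)
              (fun i _ => Real.rpow_le_rpow (h0 i).le (hle i) (by positivity)))
            (prod_nonneg fun i _ => (h0 i).le)
      _ = (∏ i, (f i : ℝ)) * (f i0 : ℝ) := by
          rw [prod_const, card_univ, Fintype.card_fin,
            ← Real.rpow_natCast ((f i0 : ℝ) ^ (1/(k:ℝ))) k, ← Real.rpow_mul (h0 i0).le,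
            one_div, inv_mul_cancel₀ (ne_of_gt hk'), Real.rpow_one]
      _ = (f i0 : ℝ) ^ 2 * ∏ i ∈ univ.erase i0, (f i : ℝ) := by
          rw [← Finset.mul_prod_erase univ _ (mem_univ i0)]; ring
      _ ≤ (f i0 : ℝ) ^ (a i0) * ∏ i ∈ univ.erase i0, (f i : ℝ) ^ (a i) := by
          refine mul_le_mul (pow_le_pow_right₀ (h1 i0) ha0)
            (prod_le_prod (fun i _ => (h0 i).le)
              (fun i _ => le_self_pow₀ (h1 i) (by have := ha i; omega)))
            (prod_nonneg fun i _ => (h0 i).le) (by positivity)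
      _ = ∏ i, (f i : ℝ) ^ (a i) := Finset.mul_prod_erase univ (fun i => (f i : ℝ) ^ (a i)) (mem_univ i0)
  have e1 : ∏ i, 1 / ((f i : ℝ) ^ (a i)) = (∏ i, (f i : ℝ) ^ (a i))⁻¹ := by
    rw [← Finset.prod_inv_distrib]
    simp [one_div]
  have e2 : ∏ i, 1 / ((f i : ℝ)) ^ q = (∏ i, (f i : ℝ) ^ q)⁻¹ := by
    rw [← Finset.prod_inv_distrib]
    simp [one_div]
  rw [e1, e2]
  exact inv_anti₀ (prod_pos fun i _ => Real.rpow_pos_of_pos (h0 i) q) key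
section Claims

variable (k : ℕ) (a : Fin k → ℕ)

/-- summability of alternating summands -/
lemma summable_G (hF : Summable (fun n : {f : Fin k → ℕ // StrictAnti f ∧ ∀ i, 0 < f i} =>
      ∏ i, 1 / ((n.1 i : ℝ) ^ (a i)))) (ε : Fin k → ℤˣ) :
    Summable (fun n : {f : Fin k → ℕ // StrictAnti f ∧ ∀ i, 0 < f i} =>
      ∏ i, ((ε i : ℤ) : ℝ) ^ (n.1 i) / ((n.1 i : ℝ) ^ (a i))) := by
  apply Summable.of_abs
  refine hF.congr fun n => ?_
  rw [Finset.abs_prod]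
  refine prod_congr rfl fun i _ => ?_
  rcases Int.units_eq_one_or (ε i) with h | h <;>
    rw [h] <;>
    simp [abs_div, abs_pow, abs_inv, Nat.abs_cast]

lemma pointwise1 (n : {f : Fin k → ℕ // StrictAnti f ∧ ∀ i, 0 < f i}) :
    ∑ ε : Fin k → ℤˣ, ((-1:ℝ)) ^ (univ.filter (fun i => ε i = -1)).card *
        ∏ i, ((ε i : ℤ) : ℝ) ^ (n.1 i) / ((n.1 i : ℝ) ^ (a i)) =
      if (∀ i, Odd (n.1 i)) then (2:ℝ)^k * ∏ i, 1 / ((n.1 i : ℝ) ^ (a i)) else 0 := by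
  have hsign : ∀ ε : Fin k → ℤˣ, ((-1:ℝ)) ^ (univ.filter (fun i => ε i = -1)).card =
      ∏ i, (if ε i = -1 then (-1:ℝ) else 1) := by
    intro ε
    rw [Finset.prod_ite, Finset.prod_const, Finset.prod_const, one_pow, mul_one]
  calc ∑ ε : Fin k → ℤˣ, ((-1:ℝ)) ^ (univ.filter (fun i => ε i = -1)).card *
        ∏ i, ((ε i : ℤ) : ℝ) ^ (n.1 i) / ((n.1 i : ℝ) ^ (a i))
      = ∑ ε : Fin k → ℤˣ, ∏ i, ((if ε i = -1 then (-1:ℝ) else 1) *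
          (((ε i : ℤ) : ℝ) ^ (n.1 i) / ((n.1 i : ℝ) ^ (a i)))) := by
        refine sum_congr rfl fun ε _ => ?_
        rw [hsign, ← prod_mul_distrib]
    _ = ∏ i, ∑ u : ℤˣ, ((if u = -1 then (-1:ℝ) else 1) *
          (((u : ℤ) : ℝ) ^ (n.1 i) / ((n.1 i : ℝ) ^ (a i)))) :=
        sum_pi_prod k (fun i u => (if u = -1 then (-1:ℝ) else 1) *
          (((u : ℤ) : ℝ) ^ (n.1 i) / ((n.1 i : ℝ) ^ (a i))))
    _ = ∏ i, (1 - (-1:ℝ) ^ (n.1 i)) / ((n.1 i : ℝ) ^ (a i)) := by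
        refine prod_congr rfl fun i _ => ?_
        rw [sum_units_real]
        simp only [if_neg (by decide : ¬ (1:ℤˣ) = -1), reduceIte, Units.val_one,
          Units.val_neg, Int.cast_one, Int.cast_neg, one_pow]
        ring
    _ = _ := by
        by_cases hodd : ∀ i, Odd (n.1 i)
        · rw [if_pos hodd]
          calc ∏ i, (1 - (-1:ℝ) ^ (n.1 i)) / ((n.1 i : ℝ) ^ (a i))
              = ∏ i, (2:ℝ) * (1 / ((n.1 i : ℝ) ^ (a i))) := by
                refine prod_congr rfl fun i _ => ?_
                rw [(hodd i).neg_one_pow]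
                ring
            _ = (2:ℝ)^k * ∏ i, 1 / ((n.1 i : ℝ) ^ (a i)) := by
                rw [prod_mul_distrib, prod_const, card_univ, Fintype.card_fin]
        · rw [if_neg hodd]
          push_neg at hodd
          obtain ⟨i, hi⟩ := hodd
          refine prod_eq_zero (mem_univ i) ?_
          rw [Nat.not_odd_iff_even] at hi
          rw [hi.neg_one_pow]
          simp

lemma pointwise2 (n : {f : Fin k → ℕ // StrictAnti f ∧ ∀ i, 0 < f i}) :
    ∑ ε : Fin k → ℤˣ, ∏ i, ((ε i : ℤ) : ℝ) ^ (n.1 i) / ((n.1 i : ℝ) ^ (a i)) =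
      if (∀ i, Even (n.1 i)) then (2:ℝ)^k * ∏ i, 1 / ((n.1 i : ℝ) ^ (a i)) else 0 := by
  calc ∑ ε : Fin k → ℤˣ, ∏ i, ((ε i : ℤ) : ℝ) ^ (n.1 i) / ((n.1 i : ℝ) ^ (a i))
      = ∏ i, ∑ u : ℤˣ, (((u : ℤ) : ℝ) ^ (n.1 i) / ((n.1 i : ℝ) ^ (a i))) :=
        sum_pi_prod k (fun i u => ((u : ℤ) : ℝ) ^ (n.1 i) / ((n.1 i : ℝ) ^ (a i)))
    _ = ∏ i, (1 + (-1:ℝ) ^ (n.1 i)) / ((n.1 i : ℝ) ^ (a i)) := by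
        refine prod_congr rfl fun i _ => ?_
        rw [sum_units_real]
        simp only [Units.val_one, Units.val_neg, Int.cast_one, Int.cast_neg, one_pow]
        ring
    _ = _ := by
        by_cases hev : ∀ i, Even (n.1 i)
        · rw [if_pos hev]
          calc ∏ i, (1 + (-1:ℝ) ^ (n.1 i)) / ((n.1 i : ℝ) ^ (a i))
              = ∏ i, (2:ℝ) * (1 / ((n.1 i : ℝ) ^ (a i))) := by
                refine prod_congr rfl fun i _ => ?_
                rw [(hev i).neg_one_pow]
                ring
            _ = (2:ℝ)^k * ∏ i, 1 / ((n.1 i : ℝ) ^ (a i)) := by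
                rw [prod_mul_distrib, prod_const, card_univ, Fintype.card_fin]
        · rw [if_neg hev]
          push_neg at hev
          obtain ⟨i, hi⟩ := hev
          refine prod_eq_zero (mem_univ i) ?_
          rw [Nat.not_even_iff_odd] at hi
          rw [hi.neg_one_pow]
          simp

end Claims

def evenEquiv (k : ℕ) : {f : Fin k → ℕ // StrictAnti f ∧ ∀ i, 0 < f i} ≃
    {n : {f : Fin k → ℕ // StrictAnti f ∧ ∀ i, 0 < f i} | ∀ i, Even (n.1 i)} where
  toFun n := ⟨⟨fun i => 2 * n.1 i,
    fun i j hij => by have := n.2.1 hij; show 2 * n.1 j < 2 * n.1 i; omega,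
    fun i => by have := n.2.2 i; show 0 < 2 * n.1 i; omega⟩,
    fun i => even_two_mul _⟩
  invFun x := ⟨fun i => x.1.1 i / 2,
    fun i j hij => by
      have h := x.1.2.1 hij
      obtain ⟨c, hc⟩ := x.2 i
      obtain ⟨c', hc'⟩ := x.2 j
      show x.1.1 j / 2 < x.1.1 i / 2
      omega,
    fun i => by
      have := x.1.2.2 i
      obtain ⟨c, hc⟩ := x.2 i
      show 0 < x.1.1 i / 2
      omega⟩
  left_inv n := Subtype.ext (funext fun i => by show 2 * n.1 i / 2 = n.1 i; omega)
  right_inv x := Subtype.ext (Subtype.ext (funext fun i => by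
    obtain ⟨c, hc⟩ := x.2 i
    show 2 * (x.1.1 i / 2) = x.1.1 i
    omega))

section MainClaims

variable (k : ℕ) (a : Fin k → ℕ)

lemma multZeta_eq :
    multZeta a = ∑' n : {f : Fin k → ℕ // StrictAnti f ∧ ∀ i, 0 < f i},
      ∏ i, 1 / ((n.1 i : ℝ) ^ (a i)) := by
  rw [multZeta, altZeta]
  refine tsum_congr fun n => ?_
  refine prod_congr rfl fun i _ => ?_
  simp

lemma claim1 (hF : Summable (fun n : {f : Fin k → ℕ // StrictAnti f ∧ ∀ i, 0 < f i} =>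
      ∏ i, 1 / ((n.1 i : ℝ) ^ (a i)))) :
    ∑ ε : Fin k → ℤˣ, ((-1:ℝ)) ^ (univ.filter (fun i => ε i = -1)).card * altZeta ε a
      = 2^k * multT a := by
  have hGs := summable_G k a hF
  have step1 : ∑ ε : Fin k → ℤˣ,
        ((-1:ℝ)) ^ (univ.filter (fun i => ε i = -1)).card * altZeta ε a
      = ∑' n : {f : Fin k → ℕ // StrictAnti f ∧ ∀ i, 0 < f i},
          ∑ ε : Fin k → ℤˣ, ((-1:ℝ)) ^ (univ.filter (fun i => ε i = -1)).card *
            ∏ i, ((ε i : ℤ) : ℝ) ^ (n.1 i) / ((n.1 i : ℝ) ^ (a i)) := by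
    rw [Summable.tsum_finsetSum (fun ε _ => ((hGs ε).mul_left _))]
    refine Finset.sum_congr rfl fun ε _ => ?_
    rw [tsum_mul_left, altZeta]
  rw [step1, tsum_congr (pointwise1 k a)]
  have hind : (fun n : {f : Fin k → ℕ // StrictAnti f ∧ ∀ i, 0 < f i} =>
        if (∀ i, Odd (n.1 i)) then (2:ℝ)^k * ∏ i, 1 / ((n.1 i : ℝ) ^ (a i)) else 0)
      = Set.indicator {n : {f : Fin k → ℕ // StrictAnti f ∧ ∀ i, 0 < f i} | ∀ i, Odd (n.1 i)}
          (fun n => (2:ℝ)^k * ∏ i, 1 / ((n.1 i : ℝ) ^ (a i))) := by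
    funext n
    by_cases h : ∀ i, Odd (n.1 i) <;>
      simp [Set.indicator_apply, Set.mem_setOf_eq, h]
  rw [hind, ← _root_.tsum_subtype, tsum_mul_left]
  congr 1
  rw [multT]
  exact Eq.symm <| Equiv.tsum_eq
    (⟨fun n => ⟨⟨n.1, n.2.1, fun i => (n.2.2 i).pos⟩, n.2.2⟩,
      fun x => ⟨x.1.1, x.1.2.1, x.2⟩, fun n => rfl, fun x => rfl⟩ :
        {f : Fin k → ℕ // StrictAnti f ∧ ∀ i, Odd (f i)} ≃
        {n : {f : Fin k → ℕ // StrictAnti f ∧ ∀ i, 0 < f i} | ∀ i, Odd (n.1 i)})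
    (fun x => ∏ i, 1 / ((x.1.1 i : ℝ) ^ (a i)))

lemma claim2 (hF : Summable (fun n : {f : Fin k → ℕ // StrictAnti f ∧ ∀ i, 0 < f i} =>
      ∏ i, 1 / ((n.1 i : ℝ) ^ (a i)))) :
    ∑ ε : Fin k → ℤˣ, altZeta ε a
      = 2^k * ((2:ℝ)^(∑ i, a i))⁻¹ * multZeta a := by
  have hGs := summable_G k a hF
  have step1 : ∑ ε : Fin k → ℤˣ, altZeta ε a
      = ∑' n : {f : Fin k → ℕ // StrictAnti f ∧ ∀ i, 0 < f i},
          ∑ ε : Fin k → ℤˣ, ∏ i, ((ε i : ℤ) : ℝ) ^ (n.1 i) / ((n.1 i : ℝ) ^ (a i)) := by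
    rw [Summable.tsum_finsetSum (fun ε _ => hGs ε)]
    rfl
  rw [step1, tsum_congr (pointwise2 k a)]
  have hind : (fun n : {f : Fin k → ℕ // StrictAnti f ∧ ∀ i, 0 < f i} =>
        if (∀ i, Even (n.1 i)) then (2:ℝ)^k * ∏ i, 1 / ((n.1 i : ℝ) ^ (a i)) else 0)
      = Set.indicator {n : {f : Fin k → ℕ // StrictAnti f ∧ ∀ i, 0 < f i} | ∀ i, Even (n.1 i)}
          (fun n => (2:ℝ)^k * ∏ i, 1 / ((n.1 i : ℝ) ^ (a i))) := by
    funext n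
    by_cases h : ∀ i, Even (n.1 i) <;>
      simp [Set.indicator_apply, Set.mem_setOf_eq, h]
  rw [hind, ← _root_.tsum_subtype, tsum_mul_left, mul_assoc]
  congr 1
  -- ⊢ ∑' x : Seven, F x.1 = (2^∑a)⁻¹ * multZeta a
  set d := evenEquiv k with hddef
  rw [← Equiv.tsum_eq d (fun x => ∏ i, 1 / ((x.1.1 i : ℝ) ^ (a i)))]
  have hpt : ∀ n : {f : Fin k → ℕ // StrictAnti f ∧ ∀ i, 0 < f i},
      (∏ i, 1 / (((d n).1.1 i : ℝ) ^ (a i)))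
        = ((2:ℝ)^(∑ i, a i))⁻¹ * ∏ i, 1 / ((n.1 i : ℝ) ^ (a i)) := by
    intro n
    have hd : ∀ i, ((d n).1.1 i : ℝ) = 2 * (n.1 i : ℝ) := by
      intro i
      show ((2 * n.1 i : ℕ) : ℝ) = _
      push_cast
      ring
    calc ∏ i, 1 / (((d n).1.1 i : ℝ) ^ (a i))
        = ∏ i, ((1/(2:ℝ)^(a i)) * (1 / ((n.1 i : ℝ) ^ (a i)))) := by
          refine prod_congr rfl fun i _ => ?_
          rw [hd i, mul_pow]
          ring
      _ = (∏ i, 1/(2:ℝ)^(a i)) * ∏ i, 1 / ((n.1 i : ℝ) ^ (a i)) := prod_mul_distrib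
      _ = _ := by
          congr 1
          rw [← Finset.prod_pow_eq_pow_sum, ← Finset.prod_inv_distrib]
          exact prod_congr rfl fun i _ => one_div _
  rw [tsum_congr hpt, tsum_mul_left, multZeta_eq]

end MainClaims

end Aux

/-- A multiple t-value in terms of `2^(k-1) + 1` alternating multiple zeta
values: `t(a) = 2^(−|a|) ζ(a) − 2^(−(k−1)) Σ_{p odd} L_p ζ(a)`, where
`L_p ζ(a)` sums the alternating multiple zeta values with exactly `p` bars. -/
theorem multT_eq_zeta_sub_odd_sums (k : ℕ) (hk : 0 < k) (a : Fin k → ℕ)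
    (ha0 : 2 ≤ a ⟨0, hk⟩) (ha : ∀ i, 1 ≤ a i) :
    multT a =
      ((2 : ℝ) ^ (∑ i, a i))⁻¹ * multZeta a -
        ((2 : ℝ) ^ (k - 1))⁻¹ *
          ∑ p ∈ (Finset.range (k + 1)).filter (fun p => Odd p),
            ∑ ε ∈ Finset.univ.filter
                (fun ε : Fin k → ℤˣ =>
                  (Finset.univ.filter (fun i => ε i = -1)).card = p),
              altZeta ε a := by
  classical
  have hF := summable_F k hk a ha0 ha
  have hc1 := claim1 k a hF
  have hc2 := claim2 k a hF
  set c : (Fin k → ℤˣ) → ℕ := fun ε => (Finset.univ.filter (fun i => ε i = -1)).card with hc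
  set O : ℝ := ∑ ε ∈ Finset.univ.filter (fun ε => Odd (c ε)), altZeta ε a with hO
  set E : ℝ := ∑ ε ∈ Finset.univ.filter (fun ε => ¬ Odd (c ε)), altZeta ε a with hE
  -- double sum equals O
  have h3 : ∑ p ∈ (Finset.range (k + 1)).filter (fun p => Odd p),
      ∑ ε ∈ Finset.univ.filter (fun ε : Fin k → ℤˣ => c ε = p), altZeta ε a = O := by
    rw [Finset.sum_fiberwise_eq_sum_filter Finset.univ
      ((Finset.range (k + 1)).filter (fun p => Odd p)) c (fun ε => altZeta ε a)]
    rw [hO]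
    refine Finset.sum_congr (Finset.filter_congr fun ε _ => ?_) fun _ _ => rfl
    have hle : c ε ≤ k := le_trans (Finset.card_filter_le _ _) (by simp)
    simp [Finset.mem_filter, Finset.mem_range, Nat.lt_succ_iff, hle]
  -- split claim1
  have h1 : E - O = 2^k * multT a := by
    rw [← hc1,
      ← Finset.sum_filter_add_sum_filter_not Finset.univ (fun ε => Odd (c ε))
        (fun ε => ((-1:ℝ)) ^ (c ε) * altZeta ε a)]
    have hOO : ∑ ε ∈ Finset.univ.filter (fun ε => Odd (c ε)),
        ((-1:ℝ)) ^ (c ε) * altZeta ε a = -O := by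
      rw [hO, ← Finset.sum_neg_distrib]
      refine Finset.sum_congr rfl fun ε hε => ?_
      rw [(Finset.mem_filter.mp hε).2.neg_one_pow]
      ring
    have hEE : ∑ ε ∈ Finset.univ.filter (fun ε => ¬ Odd (c ε)),
        ((-1:ℝ)) ^ (c ε) * altZeta ε a = E := by
      rw [hE]
      refine Finset.sum_congr rfl fun ε hε => ?_
      have hev : Even (c ε) := Nat.not_odd_iff_even.mp (Finset.mem_filter.mp hε).2
      rw [hev.neg_one_pow, one_mul]
    rw [hOO, hEE]
    ring
  have h2 : E + O = 2^k * ((2:ℝ)^(∑ i, a i))⁻¹ * multZeta a := by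
    rw [← hc2,
      ← Finset.sum_filter_add_sum_filter_not Finset.univ (fun ε => Odd (c ε))
        (fun ε => altZeta ε a)]
    ring
  rw [h3]
  obtain ⟨m, rfl⟩ : ∃ m, k = m + 1 := ⟨k - 1, by omega⟩
  have hpow : (2:ℝ)^(m+1) = 2 * 2^((m+1) - 1) := by
    simp [pow_succ]
    ring
  have hX : (0:ℝ) < 2^((m+1) - 1) := by positivity
  rw [hpow] at h1 h2
  have hz : ((2:ℝ)^(∑ i, a i))⁻¹ * multZeta a = (E + O) / (2 * 2^((m+1) - 1)) := by
    rw [h2]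
    field_simp
  have ht : multT a = (E - O) / (2 * 2^((m+1) - 1)) := by
    rw [h1]
    field_simp
  rw [hz, ht]
  field_simp
  ring
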